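/- Let $p \equiv 1 \pmod 4$ be prime, $n \geq 3$, $r = \lfloor n/2 \rfloor$, $s = \lfloor (n-1)/2 \rfloor$. Let $\mathcal{O} \subset M_2(\mathbb{Q})$ be the $\mathbb{Z}$-lattice spanned by $\begin{pmatrix}1&0\\0&1\end{pmatrix}, \begin{pmatrix}0&1\\p&0\end{pmatrix}, \begin{pmatrix}p^r&0\\0&0\end{pmatrix}, \begin{pmatrix}0&p^s\\0&0\end{pmatrix}$. Then $\mathcal{O}$ is closed under multiplication, i.e., it is a subring (an order) of $M_2(\mathbb{Q})$, and its index in $M_2(\mathbb{Z})$ as an abelian group is $p^n$. -/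

import Mathlib

/-!
With `r, s` the two exponents, the integer combination of the four generators with
coefficients `a, b, c, d` is the integer matrix `!![a + c pʳ, b + d pˢ; b p, a]`, so the
lattice is exactly the set of integer matrices `M` with `M₁₀ ≡ p M₀₁ (mod pˢ⁺¹)` and
`M₁₁ ≡ M₀₀ (mod pʳ)`, i.e. the kernel of a surjection `M₂(ℤ) → ℤ/pˢ⁺¹ × ℤ/pʳ`. Its index is
therefore `pˢ⁺¹⁺ʳ = pⁿ`, and the two congruences survive products as soon as `s ≤ r ≤ s + 1`.
-/

theorem mem_span_four_iff {R M : Type*} [Semiring R] [AddCommMonoid M] [Module R M]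
    {a b c d x : M} :
    x ∈ Submodule.span R {a, b, c, d} ↔ ∃ i j k l : R, i • a + j • b + k • c + l • d = x := by
  simp only [Submodule.mem_span_insert, Submodule.mem_span_singleton]
  constructor
  · rintro ⟨i, _, ⟨j, _, ⟨k, _, ⟨l, rfl⟩, rfl⟩, rfl⟩, rfl⟩
    exact ⟨i, j, k, l, by simp only [add_assoc]⟩
  · rintro ⟨i, j, k, l, rfl⟩
    exact ⟨i, _, ⟨j, _, ⟨k, _, ⟨l, rfl⟩, rfl⟩, rfl⟩, by simp only [add_assoc]⟩

def castMatrix : Matrix (Fin 2) (Fin 2) ℤ →+* Matrix (Fin 2) (Fin 2) ℚ :=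
  (Int.castRingHom ℚ).mapMatrix

theorem castMatrix_injective : Function.Injective castMatrix :=
  Matrix.map_injective Int.cast_injective

def stdGens : Set (Matrix (Fin 2) (Fin 2) ℚ) :=
  {!![1, 0; 0, 0], !![0, 1; 0, 0], !![0, 0; 1, 0], !![0, 0; 0, 1]}

theorem stdGens_combination_eq (i j k l : ℤ) :
    i • !![(1 : ℚ), 0; 0, 0] + j • !![0, 1; 0, 0] + k • !![0, 0; 1, 0] + l • !![0, 0; 0, 1]
      = castMatrix !![i, j; k, l] := by
  ext a b
  fin_cases a <;> fin_cases b <;> simp [castMatrix]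

theorem span_stdGens_eq_range :
    (Submodule.span ℤ stdGens).toAddSubgroup = castMatrix.toAddMonoidHom.range := by
  ext X
  simp only [Submodule.mem_toAddSubgroup, stdGens, mem_span_four_iff, stdGens_combination_eq,
    AddMonoidHom.mem_range, RingHom.toAddMonoidHom_eq_coe, AddMonoidHom.coe_coe]
  constructor
  · rintro ⟨i, j, k, l, rfl⟩
    exact ⟨_, rfl⟩
  · rintro ⟨M, rfl⟩
    exact ⟨M 0 0, M 0 1, M 1 0, M 1 1, by rw [← Matrix.eta_fin_two M]⟩

section

variable (p r s : ℕ)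

def orderGens : Set (Matrix (Fin 2) (Fin 2) ℚ) :=
  {!![1, 0; 0, 1], !![0, 1; (p : ℚ), 0], !![(p : ℚ) ^ r, 0; 0, 0], !![0, (p : ℚ) ^ s; 0, 0]}

theorem orderGens_combination_eq (i j k l : ℤ) :
    i • !![1, 0; 0, 1] + j • !![0, 1; (p : ℚ), 0] + k • !![(p : ℚ) ^ r, 0; 0, 0]
      + l • !![0, (p : ℚ) ^ s; 0, 0]
      = castMatrix !![i + k * p ^ r, j + l * p ^ s; j * p, i] := by
  ext a b
  fin_cases a <;> fin_cases b <;> simp [castMatrix]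

def orderResidue : Matrix (Fin 2) (Fin 2) ℤ →+ ZMod (p ^ (s + 1)) × ZMod (p ^ r) where
  toFun M := (((M 1 0 - p * M 0 1 : ℤ) : ZMod (p ^ (s + 1))), ((M 1 1 - M 0 0 : ℤ) : ZMod (p ^ r)))
  map_zero' := by simp
  map_add' M N := by
    simp only [Matrix.add_apply, Prod.mk_add_mk, Int.cast_sub, Int.cast_add, Int.cast_mul]
    congr 1 <;> ring

theorem orderResidue_surjective : Function.Surjective (orderResidue p r s) := by
  rintro ⟨u, v⟩
  obtain ⟨x, rfl⟩ := ZMod.intCast_surjective u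
  obtain ⟨y, rfl⟩ := ZMod.intCast_surjective v
  exact ⟨!![0, 0; x, y], by simp [orderResidue]⟩

variable {p r s} in
theorem mem_ker_orderResidue {M : Matrix (Fin 2) (Fin 2) ℤ} :
    M ∈ (orderResidue p r s).ker ↔
      (p : ℤ) ^ (s + 1) ∣ M 1 0 - p * M 0 1 ∧ (p : ℤ) ^ r ∣ M 1 1 - M 0 0 := by
  simp only [AddMonoidHom.mem_ker, orderResidue, AddMonoidHom.coe_mk, ZeroHom.coe_mk,
    Prod.mk_eq_zero, ZMod.intCast_zmod_eq_zero_iff_dvd, Nat.cast_pow]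

theorem span_orderGens_eq_map :
    (Submodule.span ℤ (orderGens p r s)).toAddSubgroup
      = (orderResidue p r s).ker.map castMatrix.toAddMonoidHom := by
  ext X
  simp only [Submodule.mem_toAddSubgroup, orderGens, mem_span_four_iff, orderGens_combination_eq,
    AddSubgroup.mem_map, RingHom.toAddMonoidHom_eq_coe, AddMonoidHom.coe_coe]
  constructor
  · rintro ⟨i, j, k, l, rfl⟩
    exact ⟨_, mem_ker_orderResidue.2 ⟨⟨-l, show j * p - p * (j + l * p ^ s) = p ^ (s + 1) * -l by ring⟩,
      ⟨-k, show i - (i + k * p ^ r) = p ^ r * -k by ring⟩⟩, rfl⟩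
  · rintro ⟨M, hM, rfl⟩
    obtain ⟨⟨k, hk⟩, ⟨m, hm⟩⟩ := mem_ker_orderResidue.1 hM
    refine ⟨M 1 1, M 0 1 + k * p ^ s, -m, -k, congrArg castMatrix ?_⟩
    ext a b
    fin_cases a <;> fin_cases b <;>
      simp only [Matrix.of_apply, Matrix.cons_val', Matrix.cons_val_zero, Matrix.cons_val_one,
        Matrix.cons_val_fin_one, Fin.zero_eta, Fin.mk_one, Fin.isValue]
    · linear_combination hm
    · ring
    · linear_combination -hk

theorem relIndex_span_orderGens :
    (Submodule.span ℤ (orderGens p r s)).toAddSubgroup.relIndex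
      (Submodule.span ℤ stdGens).toAddSubgroup = p ^ (s + 1 + r) := by
  rw [span_orderGens_eq_map, span_stdGens_eq_range, AddMonoidHom.range_eq_map,
    AddSubgroup.relIndex_map_map_of_injective _ _ castMatrix_injective,
    AddSubgroup.relIndex_top_right, AddSubgroup.index_ker,
    AddMonoidHom.range_eq_top.2 (orderResidue_surjective p r s),
    Nat.card_congr AddSubgroup.topEquiv.toEquiv, Nat.card_prod, Nat.card_zmod, Nat.card_zmod,
    ← pow_add]

variable {p r s}

theorem mul_mem_ker_orderResidue (hsr : s ≤ r) (hrs : r ≤ s + 1)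
    {M N : Matrix (Fin 2) (Fin 2) ℤ}
    (hM : M ∈ (orderResidue p r s).ker) (hN : N ∈ (orderResidue p r s).ker) :
    M * N ∈ (orderResidue p r s).ker := by
  obtain ⟨hM₁, hM₂⟩ := mem_ker_orderResidue.1 hM
  obtain ⟨hN₁, hN₂⟩ := mem_ker_orderResidue.1 hN
  have hpr : (p : ℤ) ^ (s + 1) ∣ p * (p : ℤ) ^ r := by
    rw [pow_succ']
    exact mul_dvd_mul_left _ (pow_dvd_pow _ hsr)
  have hps : (p : ℤ) ^ r ∣ (p : ℤ) ^ (s + 1) := pow_dvd_pow _ hrs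
  refine mem_ker_orderResidue.2 ⟨?_, ?_⟩ <;> simp only [Matrix.mul_apply, Fin.sum_univ_two]
  · have h : M 1 0 * N 0 0 + M 1 1 * N 1 0 - p * (M 0 0 * N 0 1 + M 0 1 * N 1 1)
        = (M 1 0 - p * M 0 1) * N 0 0 + M 1 1 * (N 1 0 - p * N 0 1)
          + p * (N 0 1 * (M 1 1 - M 0 0) - M 0 1 * (N 1 1 - N 0 0)) := by ring
    rw [h]
    exact ((hM₁.mul_right _).add (hN₁.mul_left _)).add
      (hpr.trans (mul_dvd_mul_left _ ((hM₂.mul_left _).sub (hN₂.mul_left _))))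
  · have h : M 1 0 * N 0 1 + M 1 1 * N 1 1 - (M 0 0 * N 0 0 + M 0 1 * N 1 0)
        = (M 1 0 - p * M 0 1) * N 0 1 - M 0 1 * (N 1 0 - p * N 0 1)
          + (M 1 1 - M 0 0) * N 1 1 + M 0 0 * (N 1 1 - N 0 0) := by ring
    rw [h]
    exact ((((hps.trans hM₁).mul_right _).sub ((hps.trans hN₁).mul_left _)).add
      (hM₂.mul_right _)).add (hN₂.mul_left _)

theorem mul_mem_span_orderGens (hsr : s ≤ r) (hrs : r ≤ s + 1) {X Y : Matrix (Fin 2) (Fin 2) ℚ}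
    (hX : X ∈ Submodule.span ℤ (orderGens p r s)) (hY : Y ∈ Submodule.span ℤ (orderGens p r s)) :
    X * Y ∈ Submodule.span ℤ (orderGens p r s) := by
  rw [← Submodule.mem_toAddSubgroup, span_orderGens_eq_map] at hX hY ⊢
  obtain ⟨M, hM, rfl⟩ := hX
  obtain ⟨N, hN, rfl⟩ := hY
  exact ⟨M * N, mul_mem_ker_orderResidue hsr hrs hM hN, map_mul castMatrix M N⟩

end

theorem order_in_M2Q_index_general
    (p n : ℕ) (hn : 3 ≤ n) :
    (∀ x ∈ Submodule.span ℤ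
        ({!![1, 0; 0, 1], !![0, 1; (p : ℚ), 0], !![(p : ℚ) ^ (n / 2), 0; 0, 0],
          !![0, (p : ℚ) ^ ((n - 1) / 2); 0, 0]} : Set (Matrix (Fin 2) (Fin 2) ℚ)),
      ∀ y ∈ Submodule.span ℤ
        ({!![1, 0; 0, 1], !![0, 1; (p : ℚ), 0], !![(p : ℚ) ^ (n / 2), 0; 0, 0],
          !![0, (p : ℚ) ^ ((n - 1) / 2); 0, 0]} : Set (Matrix (Fin 2) (Fin 2) ℚ)),
        x * y ∈ Submodule.span ℤ
        ({!![1, 0; 0, 1], !![0, 1; (p : ℚ), 0], !![(p : ℚ) ^ (n / 2), 0; 0, 0],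
          !![0, (p : ℚ) ^ ((n - 1) / 2); 0, 0]} : Set (Matrix (Fin 2) (Fin 2) ℚ))) ∧
    AddSubgroup.relIndex
      (Submodule.span ℤ
        ({!![1, 0; 0, 1], !![0, 1; (p : ℚ), 0], !![(p : ℚ) ^ (n / 2), 0; 0, 0],
          !![0, (p : ℚ) ^ ((n - 1) / 2); 0, 0]} : Set (Matrix (Fin 2) (Fin 2) ℚ))).toAddSubgroup
      (Submodule.span ℤ
        ({!![1, 0; 0, 0], !![0, 1; 0, 0], !![0, 0; 1, 0],
          !![0, 0; 0, 1]} : Set (Matrix (Fin 2) (Fin 2) ℚ))).toAddSubgroup = p ^ n := by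
  refine ⟨fun x hx y hy => mul_mem_span_orderGens (by omega) (by omega) hx hy, ?_⟩
  exact (relIndex_span_orderGens p _ _).trans (congrArg (p ^ ·) (by omega))

/-- Let `p ≡ 1 (mod 4)` be prime, `n ≥ 3`, `r = ⌊n/2⌋`, `s = ⌊(n-1)/2⌋`. The ℤ-lattice
`𝒪 ⊂ M₂(ℚ)` spanned by `1`, `!![0,1;p,0]`, `!![p^r,0;0,0]`, `!![0,p^s;0,0]` is closed
under multiplication (an order of `M₂(ℚ)`), and its index in `M₂(ℤ)` as an abelian group
is `p^n`. -/
theorem order_in_M2Q_index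
    (p n : ℕ) (hp : p.Prime) (hmod : p % 4 = 1) (hn : 3 ≤ n) :
    (∀ x ∈ Submodule.span ℤ
        ({!![1, 0; 0, 1], !![0, 1; (p : ℚ), 0], !![(p : ℚ) ^ (n / 2), 0; 0, 0],
          !![0, (p : ℚ) ^ ((n - 1) / 2); 0, 0]} : Set (Matrix (Fin 2) (Fin 2) ℚ)),
      ∀ y ∈ Submodule.span ℤ
        ({!![1, 0; 0, 1], !![0, 1; (p : ℚ), 0], !![(p : ℚ) ^ (n / 2), 0; 0, 0],
          !![0, (p : ℚ) ^ ((n - 1) / 2); 0, 0]} : Set (Matrix (Fin 2) (Fin 2) ℚ)),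
        x * y ∈ Submodule.span ℤ
        ({!![1, 0; 0, 1], !![0, 1; (p : ℚ), 0], !![(p : ℚ) ^ (n / 2), 0; 0, 0],
          !![0, (p : ℚ) ^ ((n - 1) / 2); 0, 0]} : Set (Matrix (Fin 2) (Fin 2) ℚ))) ∧
    AddSubgroup.relIndex
      (Submodule.span ℤ
        ({!![1, 0; 0, 1], !![0, 1; (p : ℚ), 0], !![(p : ℚ) ^ (n / 2), 0; 0, 0],
          !![0, (p : ℚ) ^ ((n - 1) / 2); 0, 0]} : Set (Matrix (Fin 2) (Fin 2) ℚ))).toAddSubgroup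
      (Submodule.span ℤ
        ({!![1, 0; 0, 0], !![0, 1; 0, 0], !![0, 0; 1, 0],
          !![0, 0; 0, 1]} : Set (Matrix (Fin 2) (Fin 2) ℚ))).toAddSubgroup = p ^ n :=
  order_in_M2Q_index_general p n hn
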